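/- Let m be a positive integer and R a commutative ring which is an ℝ-algebra. Let g ∈ Mₘ(R) be symmetric and invertible, ζ ∈ R^{1×m}, z ∈ R invertible, and define W̄ := [[z, zζ, ½ z⁻¹ ζ g⁻¹ ζᵀ],[0, z·1ₘ, z⁻¹ g⁻¹ ζᵀ],[0, 0, z⁻¹]] (blocks of sizes (1, m, 1)). Let Ω₀ := [[f, C, 0],[T, W, g⁻¹Cᵀ],[0, Tᵀg, −f]] with f ∈ R, C ∈ R^{1×m}, T ∈ R^{m×1}, W ∈ Mₘ(R). Then the matrix W̄⁻¹ · Ω₀ · W̄ has the following blocks: (1,1) block f − ζT; (2,1) block T; (2,2) block W + Tζ − g⁻¹ζᵀTᵀg; (1,2) block C − ζW + (f − ζT)ζ + ½(ζ g⁻¹ ζᵀ)·Tᵀg; (3,2) block Tᵀ·(z²g); and (3,3) block ζT − f. In particular, under the residual Weyl transformation the torsion T is invariant and the metric block transforms as g ↦ z²g. -/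

import Mathlib

/-!
The Weyl matrix factors as `W̄ = U(ζ) · D(z)`, a unipotent "translation" `U(ζ)` (with
`U(ζ)⁻¹ = U(-ζ)`, because the `(1,3)` corner `½ ζ g⁻¹ ζᵀ` is quadratic in `ζ`) followed by the
dilation `D(z) = diag(z, z·1ₘ, z⁻¹)`. Conjugating by `D(z)` multiplies the `(i,j)` block by
`dᵢ⁻¹ dⱼ`, which is `1` on every block in question except `(3,2)`, where it is `z²`. Conjugating
`Ω₀` by `U(ζ)` is a direct block computation that only uses `g g⁻¹ = 1` and that `1 × 1`
matrices are symmetric.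
-/

open Matrix

/-- 3×3 block matrix with block sizes (1, m, 1). -/
def B3 {R : Type*} {m : ℕ}
    (a11 : Matrix (Fin 1) (Fin 1) R) (a12 : Matrix (Fin 1) (Fin m) R) (a13 : Matrix (Fin 1) (Fin 1) R)
    (a21 : Matrix (Fin m) (Fin 1) R) (a22 : Matrix (Fin m) (Fin m) R) (a23 : Matrix (Fin m) (Fin 1) R)
    (a31 : Matrix (Fin 1) (Fin 1) R) (a32 : Matrix (Fin 1) (Fin m) R) (a33 : Matrix (Fin 1) (Fin 1) R) :
    Matrix (Fin 1 ⊕ (Fin m ⊕ Fin 1)) (Fin 1 ⊕ (Fin m ⊕ Fin 1)) R :=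
  Matrix.fromBlocks a11 (Matrix.fromCols a12 a13) (Matrix.fromRows a21 a31)
    (Matrix.fromBlocks a22 a23 a32 a33)

/-- Block extractors for a 3×3 block matrix with block sizes (1, m, 1). -/
def blk11 {R : Type*} {m : ℕ} (M : Matrix (Fin 1 ⊕ (Fin m ⊕ Fin 1)) (Fin 1 ⊕ (Fin m ⊕ Fin 1)) R) :
    Matrix (Fin 1) (Fin 1) R := M.submatrix Sum.inl Sum.inl
def blk12 {R : Type*} {m : ℕ} (M : Matrix (Fin 1 ⊕ (Fin m ⊕ Fin 1)) (Fin 1 ⊕ (Fin m ⊕ Fin 1)) R) :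
    Matrix (Fin 1) (Fin m) R := M.submatrix Sum.inl (fun j => Sum.inr (Sum.inl j))
def blk13 {R : Type*} {m : ℕ} (M : Matrix (Fin 1 ⊕ (Fin m ⊕ Fin 1)) (Fin 1 ⊕ (Fin m ⊕ Fin 1)) R) :
    Matrix (Fin 1) (Fin 1) R := M.submatrix Sum.inl (fun j => Sum.inr (Sum.inr j))
def blk21 {R : Type*} {m : ℕ} (M : Matrix (Fin 1 ⊕ (Fin m ⊕ Fin 1)) (Fin 1 ⊕ (Fin m ⊕ Fin 1)) R) :
    Matrix (Fin m) (Fin 1) R := M.submatrix (fun i => Sum.inr (Sum.inl i)) Sum.inl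
def blk22 {R : Type*} {m : ℕ} (M : Matrix (Fin 1 ⊕ (Fin m ⊕ Fin 1)) (Fin 1 ⊕ (Fin m ⊕ Fin 1)) R) :
    Matrix (Fin m) (Fin m) R := M.submatrix (fun i => Sum.inr (Sum.inl i)) (fun j => Sum.inr (Sum.inl j))
def blk23 {R : Type*} {m : ℕ} (M : Matrix (Fin 1 ⊕ (Fin m ⊕ Fin 1)) (Fin 1 ⊕ (Fin m ⊕ Fin 1)) R) :
    Matrix (Fin m) (Fin 1) R := M.submatrix (fun i => Sum.inr (Sum.inl i)) (fun j => Sum.inr (Sum.inr j))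
def blk31 {R : Type*} {m : ℕ} (M : Matrix (Fin 1 ⊕ (Fin m ⊕ Fin 1)) (Fin 1 ⊕ (Fin m ⊕ Fin 1)) R) :
    Matrix (Fin 1) (Fin 1) R := M.submatrix (fun i => Sum.inr (Sum.inr i)) Sum.inl
def blk32 {R : Type*} {m : ℕ} (M : Matrix (Fin 1 ⊕ (Fin m ⊕ Fin 1)) (Fin 1 ⊕ (Fin m ⊕ Fin 1)) R) :
    Matrix (Fin 1) (Fin m) R := M.submatrix (fun i => Sum.inr (Sum.inr i)) (fun j => Sum.inr (Sum.inl j))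
def blk33 {R : Type*} {m : ℕ} (M : Matrix (Fin 1 ⊕ (Fin m ⊕ Fin 1)) (Fin 1 ⊕ (Fin m ⊕ Fin 1)) R) :
    Matrix (Fin 1) (Fin 1) R := M.submatrix (fun i => Sum.inr (Sum.inr i)) (fun j => Sum.inr (Sum.inr j))

namespace Matrix

theorem transpose_eq_self_of_subsingleton {n α : Type*} [Subsingleton n] (M : Matrix n n α) :
    Mᵀ = M := by
  ext i j
  rw [Subsingleton.elim i j, transpose_apply]

end Matrix

section
variable {R : Type*} {m : ℕ}
  (a11 : Matrix (Fin 1) (Fin 1) R) (a12 : Matrix (Fin 1) (Fin m) R) (a13 : Matrix (Fin 1) (Fin 1) R)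
  (a21 : Matrix (Fin m) (Fin 1) R) (a22 : Matrix (Fin m) (Fin m) R) (a23 : Matrix (Fin m) (Fin 1) R)
  (a31 : Matrix (Fin 1) (Fin 1) R) (a32 : Matrix (Fin 1) (Fin m) R) (a33 : Matrix (Fin 1) (Fin 1) R)

@[simp] theorem blk11_B3 : blk11 (B3 a11 a12 a13 a21 a22 a23 a31 a32 a33) = a11 := rfl

@[simp] theorem blk12_B3 : blk12 (B3 a11 a12 a13 a21 a22 a23 a31 a32 a33) = a12 := rfl

@[simp] theorem blk21_B3 : blk21 (B3 a11 a12 a13 a21 a22 a23 a31 a32 a33) = a21 := rfl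

@[simp] theorem blk22_B3 : blk22 (B3 a11 a12 a13 a21 a22 a23 a31 a32 a33) = a22 := rfl

@[simp] theorem blk32_B3 : blk32 (B3 a11 a12 a13 a21 a22 a23 a31 a32 a33) = a32 := rfl

@[simp] theorem blk33_B3 : blk33 (B3 a11 a12 a13 a21 a22 a23 a31 a32 a33) = a33 := rfl

theorem B3_blk (M : Matrix (Fin 1 ⊕ (Fin m ⊕ Fin 1)) (Fin 1 ⊕ (Fin m ⊕ Fin 1)) R) :
    B3 (blk11 M) (blk12 M) (blk13 M) (blk21 M) (blk22 M) (blk23 M) (blk31 M) (blk32 M) (blk33 M)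
      = M := by
  ext (i | i | i) (j | j | j) <;> rfl

variable [CommRing R]

theorem B3_mul
    (b11 : Matrix (Fin 1) (Fin 1) R) (b12 : Matrix (Fin 1) (Fin m) R) (b13 : Matrix (Fin 1) (Fin 1) R)
    (b21 : Matrix (Fin m) (Fin 1) R) (b22 : Matrix (Fin m) (Fin m) R) (b23 : Matrix (Fin m) (Fin 1) R)
    (b31 : Matrix (Fin 1) (Fin 1) R) (b32 : Matrix (Fin 1) (Fin m) R) (b33 : Matrix (Fin 1) (Fin 1) R) :
    B3 a11 a12 a13 a21 a22 a23 a31 a32 a33 * B3 b11 b12 b13 b21 b22 b23 b31 b32 b33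
      = B3 (a11 * b11 + a12 * b21 + a13 * b31) (a11 * b12 + a12 * b22 + a13 * b32)
           (a11 * b13 + a12 * b23 + a13 * b33)
           (a21 * b11 + a22 * b21 + a23 * b31) (a21 * b12 + a22 * b22 + a23 * b32)
           (a21 * b13 + a22 * b23 + a23 * b33)
           (a31 * b11 + a32 * b21 + a33 * b31) (a31 * b12 + a32 * b22 + a33 * b32)
           (a31 * b13 + a32 * b23 + a33 * b33) := by
  simp only [B3, fromBlocks_multiply, fromCols_mul_fromRows, fromRows_mul, mul_fromCols,
    fromBlocks_mul_fromRows, fromCols_mul_fromBlocks, add_assoc]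
  congr 1
  · ext i (j | j) <;> simp
  · ext (i | i) j <;> simp
  · ext (i | i) (j | j) <;> simp

theorem B3_one : (B3 1 0 0 0 1 0 0 0 1 : Matrix (Fin 1 ⊕ (Fin m ⊕ Fin 1)) _ R) = 1 := by
  ext (i | i | i) (j | j | j) <;> simp [B3, one_apply]

def weylDilation (z zi : R) : Matrix (Fin 1 ⊕ (Fin m ⊕ Fin 1)) (Fin 1 ⊕ (Fin m ⊕ Fin 1)) R :=
  B3 (z • 1) 0 0 0 (z • 1) 0 0 0 (zi • 1)

theorem weylDilation_mul_weylDilation {z zi : R} (hz : z * zi = 1) :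
    (weylDilation zi z : Matrix (Fin 1 ⊕ (Fin m ⊕ Fin 1)) _ R) * weylDilation z zi = 1 := by
  simp [weylDilation, B3_mul, smul_smul, hz, mul_comm zi z, ← B3_one]

theorem weylDilation_conj_B3 {z zi : R} (hz : z * zi = 1) :
    weylDilation zi z * B3 a11 a12 a13 a21 a22 a23 a31 a32 a33 * weylDilation z zi
      = B3 a11 a12 ((zi * zi) • a13) a21 a22 ((zi * zi) • a23)
          ((z * z) • a31) ((z * z) • a32) a33 := by
  simp [weylDilation, B3_mul, smul_smul, hz, mul_comm zi z]

variable [Algebra ℝ R]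

noncomputable def weylTranslation (G : Matrix (Fin m) (Fin m) R) (ζ : Matrix (Fin 1) (Fin m) R) :
    Matrix (Fin 1 ⊕ (Fin m ⊕ Fin 1)) (Fin 1 ⊕ (Fin m ⊕ Fin 1)) R :=
  B3 1 ζ ((2⁻¹ : ℝ) • (ζ * G * ζᵀ)) 0 1 (G * ζᵀ) 0 0 1

theorem weylTranslation_neg_mul_self (G : Matrix (Fin m) (Fin m) R)
    (ζ : Matrix (Fin 1) (Fin m) R) :
    weylTranslation G (-ζ) * weylTranslation G ζ = 1 := by
  simp only [weylTranslation, B3_mul, transpose_neg, Matrix.neg_mul, Matrix.mul_neg, neg_neg,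
    Matrix.mul_assoc, Matrix.mul_one, Matrix.one_mul, Matrix.mul_zero, Matrix.zero_mul, add_zero,
    zero_add, add_neg_cancel, ← B3_one]
  congr 1
  module

theorem weylTranslation_mul_weylDilation (G : Matrix (Fin m) (Fin m) R)
    (ζ : Matrix (Fin 1) (Fin m) R) (z zi : R) :
    weylTranslation G ζ * weylDilation z zi
      = B3 (z • 1) (z • ζ) ((2⁻¹ : ℝ) • (zi • (ζ * G * ζᵀ))) 0 (z • 1) (zi • (G * ζᵀ))
          0 0 (zi • 1) := by
  simp [weylTranslation, weylDilation, B3_mul, smul_comm zi]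

theorem inv_weylTranslation_mul_weylDilation (G : Matrix (Fin m) (Fin m) R)
    (ζ : Matrix (Fin 1) (Fin m) R) {z zi : R} (hz : z * zi = 1) :
    (weylTranslation G ζ * weylDilation z zi)⁻¹ = weylDilation zi z * weylTranslation G (-ζ) :=
  inv_eq_left_inv <| by
    rw [Matrix.mul_assoc, ← Matrix.mul_assoc (weylTranslation G (-ζ)),
      weylTranslation_neg_mul_self, Matrix.one_mul, weylDilation_mul_weylDilation hz]

theorem blocks_weylTranslation_conj {g G : Matrix (Fin m) (Fin m) R} (hG : g * G = 1)
    (ζ : Matrix (Fin 1) (Fin m) R) (f : R) (C : Matrix (Fin 1) (Fin m) R)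
    (T : Matrix (Fin m) (Fin 1) R) (W : Matrix (Fin m) (Fin m) R) :
    let M := weylTranslation G (-ζ) * B3 (f • 1) C 0 T W (G * Cᵀ) 0 (Tᵀ * g) ((-f) • 1)
      * weylTranslation G ζ
    blk11 M = f • 1 - ζ * T ∧ blk21 M = T ∧ blk22 M = W + T * ζ - G * ζᵀ * (Tᵀ * g) ∧
    blk12 M = C - ζ * W + (f • 1 - ζ * T) * ζ + (2⁻¹ : ℝ) • ((ζ * G * ζᵀ) * (Tᵀ * g)) ∧
    blk32 M = Tᵀ * g ∧ blk33 M = ζ * T - f • 1 := by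
  intro M
  simp only [M, weylTranslation, B3_mul, blk11_B3, blk21_B3, blk22_B3, blk12_B3, blk32_B3, blk33_B3]
  refine ⟨?_, ?_, ?_, ?_, ?_, ?_⟩ <;>
    simp only [transpose_neg, neg_neg, smul_zero, neg_smul, Matrix.neg_mul, Matrix.mul_neg,
      Matrix.mul_zero, Matrix.zero_mul, Matrix.one_mul, Matrix.mul_one, Matrix.add_mul,
      Matrix.sub_mul, smul_mul, Matrix.mul_smul, Matrix.mul_assoc, add_zero, zero_add]
  · abel
  · abel
  · abel
  · rw [← Matrix.mul_assoc g, hG, Matrix.one_mul, ← transpose_mul,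
      transpose_eq_self_of_subsingleton, sub_eq_add_neg]

end

theorem stmt_12_general (m : ℕ) (R : Type*) [CommRing R] [Algebra ℝ R]
    (g : Matrix (Fin m) (Fin m) R) (hg : IsUnit g.det)
    (ζ : Matrix (Fin 1) (Fin m) R) (z zi : R) (hz : z * zi = 1)
    (f : R) (C : Matrix (Fin 1) (Fin m) R) (T : Matrix (Fin m) (Fin 1) R)
    (W : Matrix (Fin m) (Fin m) R) :
    let Wb := B3 (z • 1) (z • ζ) ((2⁻¹ : ℝ) • (zi • (ζ * g⁻¹ * ζ.transpose)))
        0 (z • (1 : Matrix (Fin m) (Fin m) R)) (zi • (g⁻¹ * ζ.transpose)) 0 0 (zi • 1);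
    let Ω₀ := B3 (f • 1) C 0 T W (g⁻¹ * C.transpose) 0 (T.transpose * g) ((-f) • 1);
    blk11 (Wb⁻¹ * Ω₀ * Wb) = f • 1 - ζ * T ∧
    blk21 (Wb⁻¹ * Ω₀ * Wb) = T ∧
    blk22 (Wb⁻¹ * Ω₀ * Wb) = W + T * ζ - g⁻¹ * ζ.transpose * (T.transpose * g) ∧
    blk12 (Wb⁻¹ * Ω₀ * Wb)
      = C - ζ * W + (f • 1 - ζ * T) * ζ
          + (2⁻¹ : ℝ) • ((ζ * g⁻¹ * ζ.transpose) * (T.transpose * g)) ∧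
    blk32 (Wb⁻¹ * Ω₀ * Wb) = T.transpose * ((z * z) • g) ∧
    blk33 (Wb⁻¹ * Ω₀ * Wb) = ζ * T - f • 1 := by
  intro Wb Ω₀
  have hWb : Wb = weylTranslation g⁻¹ ζ * weylDilation z zi :=
    (weylTranslation_mul_weylDilation g⁻¹ ζ z zi).symm
  set M := weylTranslation g⁻¹ (-ζ) * Ω₀ * weylTranslation g⁻¹ ζ
  have hconj : Wb⁻¹ * Ω₀ * Wb = weylDilation zi z * M * weylDilation z zi := by
    rw [hWb, inv_weylTranslation_mul_weylDilation g⁻¹ ζ hz]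
    simp only [M, Matrix.mul_assoc]
  obtain ⟨h11, h21, h22, h12, h32, h33⟩ :=
    blocks_weylTranslation_conj (mul_nonsing_inv g hg) ζ f C T W
  rw [hconj, ← B3_blk M, weylDilation_conj_B3 (hz := hz)]
  simp only [blk11_B3, blk21_B3, blk22_B3, blk12_B3, blk32_B3, blk33_B3]
  exact ⟨h11, h21, h22, h12, by rw [h32, Matrix.mul_smul], h33⟩

/-- The blocks of the residual Weyl transform `W̄⁻¹ Ω₀ W̄` of the dressed curvature
`Ω₀ = [[f, C, 0],[T, W, g⁻¹Cᵀ],[0, Tᵀg, −f]]`: in particular the torsion `T` is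
invariant and the metric block transforms as `g ↦ z²g`. -/
theorem stmt_12 (m : ℕ) (hm : 0 < m) (R : Type*) [CommRing R] [Algebra ℝ R]
    (g : Matrix (Fin m) (Fin m) R) (hgsymm : g.transpose = g) (hg : IsUnit g.det)
    (ζ : Matrix (Fin 1) (Fin m) R) (z zi : R) (hz : z * zi = 1)
    (f : R) (C : Matrix (Fin 1) (Fin m) R) (T : Matrix (Fin m) (Fin 1) R)
    (W : Matrix (Fin m) (Fin m) R) :
    let Wb := B3 (z • 1) (z • ζ) ((2⁻¹ : ℝ) • (zi • (ζ * g⁻¹ * ζ.transpose)))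
        0 (z • (1 : Matrix (Fin m) (Fin m) R)) (zi • (g⁻¹ * ζ.transpose)) 0 0 (zi • 1);
    let Ω₀ := B3 (f • 1) C 0 T W (g⁻¹ * C.transpose) 0 (T.transpose * g) ((-f) • 1);
    blk11 (Wb⁻¹ * Ω₀ * Wb) = f • 1 - ζ * T ∧
    blk21 (Wb⁻¹ * Ω₀ * Wb) = T ∧
    blk22 (Wb⁻¹ * Ω₀ * Wb) = W + T * ζ - g⁻¹ * ζ.transpose * (T.transpose * g) ∧
    blk12 (Wb⁻¹ * Ω₀ * Wb)
      = C - ζ * W + (f • 1 - ζ * T) * ζ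
          + (2⁻¹ : ℝ) • ((ζ * g⁻¹ * ζ.transpose) * (T.transpose * g)) ∧
    blk32 (Wb⁻¹ * Ω₀ * Wb) = T.transpose * ((z * z) • g) ∧
    blk33 (Wb⁻¹ * Ω₀ * Wb) = ζ * T - f • 1 :=
  stmt_12_general m R g hg ζ z zi hz f C T W
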